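/- arXiv:1403.3106 — 4 statements merged into one kernel-verified Lean document; each statement's English description precedes it below -/
import Mathlib

section
/- Let G be a separable metrisable topological group and U a symmetric open neighbourhood of the identity. Then there is a compatible left-invariant metric d on G such that for every subset A ⊆ G the following are equivalent: (1) A has finite d-diameter; (2) there are a finite subset F ⊆ G and some k ≥ 1 so that A ⊆ (FU)^k. -/
open Filter Topology
open scoped Pointwise

/-- A (plain) metric given as a distance function. -/
def IsMetric {G : Type*} (d : G → G → ℝ) : Prop :=
  (∀ x y, d x y = 0 ↔ x = y) ∧ (∀ x y, d x y = d y x) ∧ ∀ x y z, d x z ≤ d x y + d y z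

/-- The metric `d` induces the topology of `G`. -/
def IsCompatible (G : Type*) [TopologicalSpace G] (d : G → G → ℝ) : Prop :=
  ∀ (x : G) (s : Set G), s ∈ nhds x ↔ ∃ ε > (0 : ℝ), {y : G | d x y < ε} ⊆ s

/-- A compatible left-invariant metric on a topological group. -/
def IsCompatibleLeftInvariantMetric (G : Type*) [Group G] [TopologicalSpace G]
    (d : G → G → ℝ) : Prop :=
  IsMetric d ∧ IsCompatible G d ∧ ∀ h g f : G, d (h * g) (h * f) = d g f

/-- A set has finite diameter with respect to `d`. -/
def FiniteDiam {G : Type*} (d : G → G → ℝ) (A : Set G) : Prop :=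
  ∃ C : ℝ, ∀ x ∈ A, ∀ y ∈ A, d x y ≤ C

/-- `A` has property (OB) relative to `G`: finite diameter for every compatible
left-invariant metric. -/
def HasRelPropOB (G : Type*) [Group G] [TopologicalSpace G] (A : Set G) : Prop :=
  ∀ d : G → G → ℝ, IsCompatibleLeftInvariantMetric G d → FiniteDiam d A

/-- A sequence tends to infinity in `G` if some compatible left-invariant metric
witnesses `d (g n) 1 → ∞`. -/
def TendsToInfinity (G : Type*) [Group G] [TopologicalSpace G] (g : ℕ → G) : Prop :=
  ∃ d : G → G → ℝ, IsCompatibleLeftInvariantMetric G d ∧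
    Filter.Tendsto (fun n => d (g n) 1) Filter.atTop Filter.atTop

/-- A compatible left-invariant metric is metrically proper if `d (g n) 1 → ∞`
whenever `g n → ∞`. -/
def MetricallyProperMetric (G : Type*) [Group G] [TopologicalSpace G]
    (d : G → G → ℝ) : Prop :=
  ∀ g : ℕ → G, TendsToInfinity G g →
    Filter.Tendsto (fun n => d (g n) 1) Filter.atTop Filter.atTop

/-!
Fix a symmetric basis `V n` of neighbourhoods of `1` with `V (n + 1) ^ 3 ⊆ V n` and `V 0 ⊆ U`,
and a dense sequence `γ`. A step `g ∈ V 0` costs `2⁻¹ ^ n` for the first `n` with `g ∉ V n`;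
any other step costs `n + 1` for the first `n` with `g ∈ γ n U² ∪ U² (γ n)⁻¹`. The metric `d`
is the infimum of the total cost of chains from `x` to `y`, so it is left-invariant.

Steps outside `V 0` cost at least `1`, so a chain of cost `< 1` consists of small steps, and the
Birkhoff–Kakutani estimate (the gauge of the product of such a chain is at most twice its cost)
shows that `d` induces the topology. Each `f u` with `f ∈ F`, `u ∈ U` is one step of cost at
most `N + 1` for some `N` depending on `F`, so `(F U) ^ k` has diameter at most `2 k (N + 1)`.
Conversely, a chain of cost `< r + 1/2` splits at one step into a chain of cost `< r`, that step,
which lies in `(F U) ^ 3` for `F = {1} ∪ {(γ n) ^ (± 1) | n < r + 1/2}`, and a chain of cost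
`< 1/2`, whose product lies in `V 0 ⊆ U`; by induction every `d`-ball lies in some `(F U) ^ k`.
-/

open Set
open scoped NNReal

section ChainDist

variable {X : Type*} (e : X → X → ℝ≥0)

def chainSum (x : X) (l : List X) (y : X) : ℝ≥0 := ((x :: l).zipWith e (l ++ [y])).sum

@[simp] lemma chainSum_nil (x y : X) : chainSum e x [] y = e x y := by
  simp [chainSum]

@[simp] lemma chainSum_cons (x a : X) (l : List X) (y : X) :
    chainSum e x (a :: l) y = e x a + chainSum e a l y := by
  simp [chainSum]

noncomputable def chainDist (x y : X) : ℝ≥0 := ⨅ l : List X, chainSum e x l y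

lemma chainDist_le_chainSum (x : X) (l : List X) (y : X) : chainDist e x y ≤ chainSum e x l y :=
  ciInf_le (OrderBot.bddBelow _) l

lemma chainDist_le (x y : X) : chainDist e x y ≤ e x y := by
  simpa using chainDist_le_chainSum e x [] y

variable {e} in
lemma exists_chainSum_lt_of_chainDist_lt {x y : X} {c : ℝ≥0} (h : chainDist e x y < c) :
    ∃ l, chainSum e x l y < c :=
  exists_lt_of_ciInf_lt h

lemma chainDist_mono {e' : X → X → ℝ≥0} (h : ∀ x y, e x y ≤ e' x y) (x y : X) :
    chainDist e x y ≤ chainDist e' x y := by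
  refine le_ciInf fun l => (chainDist_le_chainSum e x l y).trans ?_
  induction l generalizing x with
  | nil => simpa using h x y
  | cons a l ih => simpa using add_le_add (h x a) (ih a)

lemma chainDist_map {f : X → X} (hf : Function.Surjective f) (he : ∀ a b, e (f a) (f b) = e a b)
    (x y : X) : chainDist e (f x) (f y) = chainDist e x y := by
  have hsum : ∀ l x, chainSum e (f x) (l.map f) (f y) = chainSum e x l y := by
    intro l
    induction l with
    | nil => simp [he]
    | cons a l ih => simp [he, ih]
  rw [chainDist, ← (List.map_surjective_iff.2 hf).iInf_comp]
  simp only [hsum, chainDist]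

variable {e} (h_self : ∀ x, e x x = 0) (h_comm : ∀ x y, e x y = e y x)
include h_self

lemma chainDist_self (x : X) : chainDist e x x = 0 :=
  le_antisymm ((chainDist_le e x x).trans_eq (h_self x)) bot_le

include h_comm

lemma coe_chainDist_eq_dist (x y : X) :
    (chainDist e x y : ℝ) = @dist X (PseudoMetricSpace.ofPreNNDist e h_self h_comm).toDist x y :=
  rfl

lemma chainDist_comm (x y : X) : chainDist e x y = chainDist e y x := by
  have := (PseudoMetricSpace.ofPreNNDist e h_self h_comm).dist_comm x y
  rwa [← coe_chainDist_eq_dist, ← coe_chainDist_eq_dist, NNReal.coe_inj] at this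

lemma chainDist_triangle (x y z : X) : chainDist e x z ≤ chainDist e x y + chainDist e y z := by
  have := (PseudoMetricSpace.ofPreNNDist e h_self h_comm).dist_triangle x y z
  rw [← coe_chainDist_eq_dist, ← coe_chainDist_eq_dist, ← coe_chainDist_eq_dist] at this
  exact_mod_cast this

lemma le_two_mul_chainDist
    (hd : ∀ x₁ x₂ x₃ x₄, e x₁ x₄ ≤ 2 * max (e x₁ x₂) (max (e x₂ x₃) (e x₃ x₄)))
    (x y : X) : e x y ≤ 2 * chainDist e x y := by
  have := PseudoMetricSpace.le_two_mul_dist_ofPreNNDist e h_self h_comm hd x y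
  rw [← coe_chainDist_eq_dist] at this
  exact_mod_cast this

lemma exists_edge_of_chainDist_lt_add {s t : ℝ≥0} (hs : 0 < s) (ht : 0 < t) {x y : X}
    (h : chainDist e x y < s + t) :
    ∃ a b, chainDist e x a < s ∧ e a b < s + t ∧ chainDist e b y < t := by
  obtain ⟨l, hl⟩ := exists_chainSum_lt_of_chainDist_lt h
  clear h
  induction l generalizing x s with
  | nil =>
    refine ⟨x, y, ?_, by simpa using hl, ?_⟩ <;> simpa [chainDist_self h_self]
  | cons a l ih =>
    rw [chainSum_cons] at hl
    rcases lt_or_ge (e x a) s with hxa | hxa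
    · have hrest : chainSum e a l y < (s - e x a) + t := by
        rw [tsub_add_eq_add_tsub hxa.le]
        exact lt_tsub_iff_left.2 hl
      obtain ⟨b, c, hab, hbc, hcy⟩ := ih (tsub_pos_of_lt hxa) hrest
      refine ⟨b, c, ?_, hbc.trans_le (by gcongr; exact tsub_le_self), hcy⟩
      calc chainDist e x b ≤ chainDist e x a + chainDist e a b :=
            chainDist_triangle h_self h_comm x a b
        _ < e x a + (s - e x a) := add_lt_add_of_le_of_lt (chainDist_le e x a) hab
        _ = s := add_tsub_cancel_of_le hxa.le
    · refine ⟨x, a, by simpa [chainDist_self h_self], lt_of_le_of_lt le_self_add hl, ?_⟩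
      exact (chainDist_le_chainSum e a l y).trans_lt
        (lt_of_add_lt_add_left (hl.trans_le' (by gcongr)))

end ChainDist

section LengthDist

variable {G : Type*} [Group G] (w : G → ℝ≥0)

/-- The largest left-invariant pseudometric with `d x y ≤ w (x⁻¹ * y)`. -/
noncomputable def lengthDist : G → G → ℝ≥0 := chainDist fun a b => w (a⁻¹ * b)

lemma lengthDist_le (x y : G) : lengthDist w x y ≤ w (x⁻¹ * y) :=
  chainDist_le _ x y

lemma lengthDist_mul_left (h x y : G) : lengthDist w (h * x) (h * y) = lengthDist w x y :=
  chainDist_map _ (mul_left_surjective h) (fun a b => by simp [mul_assoc]) x y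

lemma lengthDist_eq_lengthDist_one (x y : G) : lengthDist w x y = lengthDist w 1 (x⁻¹ * y) := by
  rw [← lengthDist_mul_left w x⁻¹ x y, inv_mul_cancel]

lemma lengthDist_mono {w' : G → ℝ≥0} (h : ∀ g, w g ≤ w' g) (x y : G) :
    lengthDist w x y ≤ lengthDist w' x y :=
  chainDist_mono _ (fun _ _ => h _) x y

variable {w} in
lemma apply_inv_mul_comm (hw_inv : ∀ g, w g⁻¹ = w g) (a b : G) :
    w (a⁻¹ * b) = w (b⁻¹ * a) := by
  rw [← hw_inv, mul_inv_rev, inv_inv]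

variable {w} (hw_one : w 1 = 0) (hw_inv : ∀ g, w g⁻¹ = w g)
include hw_one

lemma lengthDist_self (x : G) : lengthDist w x x = 0 :=
  chainDist_self (fun a => by simpa using hw_one) x

include hw_inv

lemma lengthDist_comm (x y : G) : lengthDist w x y = lengthDist w y x :=
  chainDist_comm (fun a => by simpa using hw_one) (apply_inv_mul_comm hw_inv) x y

lemma lengthDist_triangle (x y z : G) : lengthDist w x z ≤ lengthDist w x y + lengthDist w y z :=
  chainDist_triangle (fun a => by simpa using hw_one) (apply_inv_mul_comm hw_inv) x y z

lemma lengthDist_one_mul_le (a b : G) :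
    lengthDist w 1 (a * b) ≤ lengthDist w 1 a + lengthDist w 1 b :=
  calc lengthDist w 1 (a * b) ≤ lengthDist w 1 a + lengthDist w a (a * b) :=
        lengthDist_triangle hw_one hw_inv 1 a (a * b)
    _ = lengthDist w 1 a + lengthDist w 1 b := by
        rw [← lengthDist_mul_left w a 1 b, mul_one]

lemma le_two_mul_lengthDist (hw : ∀ a b c, w (a * b * c) ≤ 2 * max (w a) (max (w b) (w c)))
    (x y : G) : w (x⁻¹ * y) ≤ 2 * lengthDist w x y :=
  le_two_mul_chainDist (fun a => by simpa using hw_one) (apply_inv_mul_comm hw_inv)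
    (fun x₁ x₂ x₃ x₄ => by
      simpa [mul_assoc] using hw (x₁⁻¹ * x₂) (x₂⁻¹ * x₃) (x₃⁻¹ * x₄)) x y

lemma setOf_lengthDist_lt_add_subset {s t : ℝ≥0} (hs : 0 < s) (ht : 0 < t) :
    {g | lengthDist w 1 g < s + t} ⊆
      ({g | lengthDist w 1 g < s} : Set G) * {g | w g < s + t} * {g | lengthDist w 1 g < t} := by
  intro g hg
  obtain ⟨a, b, ha, hab, hb⟩ := exists_edge_of_chainDist_lt_add (fun a => by simpa using hw_one)
    (apply_inv_mul_comm hw_inv) hs ht hg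
  refine ⟨a * (a⁻¹ * b), mul_mem_mul ha hab, b⁻¹ * g, ?_, by group⟩
  show lengthDist w 1 (b⁻¹ * g) < t
  rwa [← lengthDist_eq_lengthDist_one]

end LengthDist

section DyadicGauge

variable {α : Type*} (V : ℕ → Set α)

open Classical in
/-- `2⁻¹ ^ n` for the first `n` with `g ∉ V n`, and `0` if there is none. -/
noncomputable def dyadicGauge (g : α) : ℝ≥0 := ⨆ n, if g ∈ V n then 0 else 2⁻¹ ^ n

variable {V}

lemma dyadicGauge_le_iff {g : α} {r : ℝ≥0} :
    dyadicGauge V g ≤ r ↔ ∀ n, r < 2⁻¹ ^ n → g ∈ V n := by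
  classical
  have hbdd : BddAbove (range fun n => if g ∈ V n then (0 : ℝ≥0) else 2⁻¹ ^ n) := by
    refine ⟨1, forall_mem_range.2 fun n => ?_⟩
    split_ifs
    exacts [zero_le_one, pow_le_one₀ bot_le (by norm_num)]
  rw [dyadicGauge, ciSup_le_iff hbdd]
  refine forall_congr' fun n => ?_
  split_ifs with hn
  · simp [hn]
  · simp only [hn, imp_false, not_lt]

lemma mem_of_dyadicGauge_lt {g : α} {n : ℕ} (h : dyadicGauge V g < 2⁻¹ ^ n) : g ∈ V n :=
  dyadicGauge_le_iff.1 le_rfl n h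

lemma dyadicGauge_le_one (g : α) : dyadicGauge V g ≤ 1 :=
  dyadicGauge_le_iff.2 fun n hn => absurd hn (pow_le_one₀ bot_le (by norm_num)).not_gt

lemma dyadicGauge_le_of_mem (hV : Antitone V) {g : α} {k : ℕ} (h : g ∈ V k) :
    dyadicGauge V g ≤ 2⁻¹ ^ (k + 1) :=
  dyadicGauge_le_iff.2 fun n hn =>
    hV (Nat.lt_succ_iff.1 <| (pow_lt_pow_iff_right_of_lt_one₀ (by norm_num) (by norm_num)).1 hn) h

lemma dyadicGauge_one [One α] (hV : ∀ n, (1 : α) ∈ V n) : dyadicGauge V 1 = 0 :=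
  le_antisymm (dyadicGauge_le_iff.2 fun n _ => hV n) bot_le

lemma dyadicGauge_inv [InvolutiveInv α] (hV : ∀ n, (V n)⁻¹ = V n) (g : α) :
    dyadicGauge V g⁻¹ = dyadicGauge V g := by
  classical
  have hmem : ∀ n, g⁻¹ ∈ V n ↔ g ∈ V n := fun n => by rw [← Set.mem_inv, hV]
  simp only [dyadicGauge, hmem]

lemma dyadicGauge_mul_mul_le [Mul α] (hV : ∀ n, V (n + 1) * V (n + 1) * V (n + 1) ⊆ V n)
    (a b c : α) : dyadicGauge V (a * b * c) ≤
      2 * max (dyadicGauge V a) (max (dyadicGauge V b) (dyadicGauge V c)) := by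
  refine dyadicGauge_le_iff.2 fun n hn => hV n ?_
  have hlt :
      max (dyadicGauge V a) (max (dyadicGauge V b) (dyadicGauge V c)) < 2⁻¹ ^ (n + 1) := by
    rw [pow_succ, ← div_eq_mul_inv, lt_div_iff₀ two_pos, mul_comm]
    exact hn
  simp only [max_lt_iff] at hlt
  exact mul_mem_mul (mul_mem_mul (mem_of_dyadicGauge_lt hlt.1) (mem_of_dyadicGauge_lt hlt.2.1))
    (mem_of_dyadicGauge_lt hlt.2.2)

end DyadicGauge

lemma le_mul_of_mem_pow {M : Type*} [Monoid M] {ℓ : M → ℝ≥0} (h_one : ℓ 1 = 0)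
    (h_mul : ∀ a b, ℓ (a * b) ≤ ℓ a + ℓ b) {X : Set M} {c : ℝ≥0}
    (hX : ∀ x ∈ X, ℓ x ≤ c) :
    ∀ k : ℕ, ∀ x ∈ X ^ k, ℓ x ≤ k * c
  | 0, x, hx => by simp_all
  | k + 1, _, ⟨a, ha, b, hb, rfl⟩ => by
    push_cast
    rw [add_mul, one_mul]
    exact (h_mul a b).trans (add_le_add (le_mul_of_mem_pow h_one h_mul hX k a ha) (hX b hb))

section Coarse

variable {G : Type*} [Group G]

structure IsCubeChain (V : ℕ → Set G) : Prop where
  one_mem : ∀ n, (1 : G) ∈ V n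
  inv_eq : ∀ n, (V n)⁻¹ = V n
  cube_subset : ∀ n, V (n + 1) * V (n + 1) * V (n + 1) ⊆ V n

lemma IsCubeChain.antitone {V : ℕ → Set G} (hV : IsCubeChain V) : Antitone V :=
  antitone_nat_of_succ_le fun n g hg =>
    hV.cube_subset n (by simpa using mul_mem_mul (mul_mem_mul hg (hV.one_mem _)) (hV.one_mem _))

def IsCoveredByFUPow (U A : Set G) : Prop :=
  ∃ F : Set G, F.Finite ∧ ∃ k : ℕ, 1 ≤ k ∧ A ⊆ (F * U) ^ k

variable {U : Set G}

lemma IsCoveredByFUPow.mono {A B : Set G} (hA : IsCoveredByFUPow U A) (hBA : B ⊆ A) :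
    IsCoveredByFUPow U B :=
  let ⟨F, hF, k, hk, hAF⟩ := hA
  ⟨F, hF, k, hk, hBA.trans hAF⟩

lemma IsCoveredByFUPow.mul {A B : Set G} (hA : IsCoveredByFUPow U A) (hB : IsCoveredByFUPow U B) :
    IsCoveredByFUPow U (A * B) := by
  obtain ⟨F, hF, k, hk, hAF⟩ := hA
  obtain ⟨F', hF', k', -, hBF⟩ := hB
  refine ⟨F ∪ F', hF.union hF', k + k', by omega, ?_⟩
  rw [pow_add]
  exact mul_subset_mul
    (hAF.trans (pow_subset_pow_left (mul_subset_mul_right subset_union_left)))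
    (hBF.trans (pow_subset_pow_left (mul_subset_mul_right subset_union_right)))

lemma isCoveredByFUPow_singleton (hU1 : (1 : G) ∈ U) (a : G) : IsCoveredByFUPow U {a} :=
  ⟨{a}, finite_singleton a, 1, le_rfl, by
    rw [pow_one]
    exact singleton_subset_iff.2 ⟨a, rfl, 1, hU1, mul_one a⟩⟩

lemma isCoveredByFUPow_self : IsCoveredByFUPow U U :=
  ⟨{1}, finite_singleton 1, 1, le_rfl, by simp⟩

def jumpSet (U : Set G) (g : G) : Set G := g • (U * U) ∪ (g • (U * U))⁻¹

lemma jumpSet_inv (g : G) : (jumpSet U g)⁻¹ = jumpSet U g := by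
  rw [jumpSet, union_inv, inv_inv, union_comm]

lemma mul_mem_jumpSet (hU : U⁻¹ = U) {f g u : G} (hfg : f⁻¹ * g ∈ U) (hu : u ∈ U) :
    f * u ∈ jumpSet U g := by
  refine Or.inl (mem_smul_set_iff_inv_smul_mem.2 ⟨g⁻¹ * f, ?_, u, hu, by simp [mul_assoc]⟩)
  rw [← hU]
  simpa using hfg

lemma jumpSet_subset_pow_three (hU1 : (1 : G) ∈ U) (hU : U⁻¹ = U) {F : Set G} {g : G}
    (h1 : 1 ∈ F) (hg : g ∈ F) (hg' : g⁻¹ ∈ F) : jumpSet U g ⊆ (F * U) ^ 3 := by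
  have hinv : ∀ {u}, u ∈ U → u⁻¹ ∈ U := fun hu => by rw [← hU]; simpa using hu
  rw [pow_three']
  rintro x (⟨_, ⟨u, hu, v, hv, rfl⟩, rfl⟩ | ⟨_, ⟨u, hu, v, hv, rfl⟩, hx⟩)
  · exact ⟨_, mul_mem_mul (mul_mem_mul hg hu) (mul_mem_mul h1 hv), _,
      mul_mem_mul h1 hU1, by simp [mul_assoc]⟩
  · refine ⟨_, mul_mem_mul (mul_mem_mul h1 (hinv hv)) (mul_mem_mul h1 (hinv hu)), _,
      mul_mem_mul hg' hU1, ?_⟩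
    rw [← inv_inv x, ← hx]
    simp [mul_assoc]

variable (U) (V : ℕ → Set G) (γ : ℕ → G)

open Classical in
noncomputable def stepCost (g : G) : ℝ≥0 :=
  if g ∈ V 0 then dyadicGauge V g else (sInf {n | g ∈ jumpSet U (γ n)} : ℕ) + 1

variable {U V γ}

lemma stepCost_one (hV : IsCubeChain V) : stepCost U V γ 1 = 0 := by
  simp [stepCost, hV.one_mem 0, dyadicGauge_one hV.one_mem]

lemma stepCost_inv (hV : IsCubeChain V) (g : G) : stepCost U V γ g⁻¹ = stepCost U V γ g := by
  classical
  have hV0 : g⁻¹ ∈ V 0 ↔ g ∈ V 0 := by rw [← Set.mem_inv, hV.inv_eq]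
  have hJ : ∀ n, g⁻¹ ∈ jumpSet U (γ n) ↔ g ∈ jumpSet U (γ n) := fun n => by
    rw [← Set.mem_inv, jumpSet_inv]
  simp only [stepCost, hV0, hJ, dyadicGauge_inv hV.inv_eq]

lemma dyadicGauge_le_stepCost (g : G) : dyadicGauge V g ≤ stepCost U V γ g := by
  unfold stepCost
  split_ifs
  · exact le_rfl
  · exact (dyadicGauge_le_one g).trans le_add_self

lemma stepCost_le_of_mem (hV : IsCubeChain V) {g : G} {k : ℕ} (h : g ∈ V k) :
    stepCost U V γ g ≤ 2⁻¹ ^ (k + 1) := by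
  rw [stepCost, if_pos (hV.antitone (Nat.zero_le k) h)]
  exact dyadicGauge_le_of_mem hV.antitone h

lemma stepCost_le_of_mem_jumpSet {g : G} {n : ℕ} (h : g ∈ jumpSet U (γ n)) :
    stepCost U V γ g ≤ n + 1 := by
  unfold stepCost
  split_ifs
  · exact (dyadicGauge_le_one g).trans le_add_self
  · gcongr
    exact Nat.sInf_le h

lemma mem_or_mem_jumpSet_of_stepCost_lt (hU1 : (1 : G) ∈ U) (hU : U⁻¹ = U)
    (hγ : ∀ f, ∃ n, f⁻¹ * γ n ∈ U) {g : G} {M : ℝ≥0} (h : stepCost U V γ g < M) :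
    g ∈ V 0 ∨ ∃ n : ℕ, (n : ℝ≥0) < M ∧ g ∈ jumpSet U (γ n) := by
  unfold stepCost at h
  split_ifs at h with hg
  · exact Or.inl hg
  · have hne : {n | g ∈ jumpSet U (γ n)}.Nonempty :=
      let ⟨n, hn⟩ := hγ g
      ⟨n, by simpa using mul_mem_jumpSet hU hn hU1⟩
    exact Or.inr ⟨_, (le_add_of_nonneg_right zero_le_one).trans_lt h, Nat.sInf_mem hne⟩

end Coarse

section CoarseMetric

variable {G : Type*} [Group G] {U : Set G} {V : ℕ → Set G} {γ : ℕ → G}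

lemma dyadicGauge_le_two_mul_lengthDist (hV : IsCubeChain V) (x y : G) :
    dyadicGauge V (x⁻¹ * y) ≤ 2 * lengthDist (stepCost U V γ) x y :=
  (le_two_mul_lengthDist (dyadicGauge_one hV.one_mem) (dyadicGauge_inv hV.inv_eq)
    (dyadicGauge_mul_mul_le hV.cube_subset) x y).trans
    (by gcongr; exact lengthDist_mono _ dyadicGauge_le_stepCost x y)

lemma mem_of_lengthDist_lt (hV : IsCubeChain V) {x y : G} {n : ℕ}
    (h : lengthDist (stepCost U V γ) x y < 2⁻¹ ^ (n + 1)) : x⁻¹ * y ∈ V n := by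
  refine mem_of_dyadicGauge_lt
    ((dyadicGauge_le_two_mul_lengthDist (U := U) (γ := γ) hV x y).trans_lt ?_)
  calc 2 * lengthDist (stepCost U V γ) x y < 2 * 2⁻¹ ^ (n + 1) := by gcongr
    _ = 2⁻¹ ^ n := by rw [pow_succ, mul_comm, mul_assoc, inv_mul_cancel₀ two_ne_zero, mul_one]

lemma lengthDist_le_of_mem (hV : IsCubeChain V) {x y : G} {n : ℕ} (h : x⁻¹ * y ∈ V n) :
    lengthDist (stepCost U V γ) x y ≤ 2⁻¹ ^ (n + 1) :=
  (lengthDist_le _ x y).trans (stepCost_le_of_mem hV h)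

lemma isCoveredByFUPow_stepCost_lt (hU1 : (1 : G) ∈ U) (hU : U⁻¹ = U) (hV0 : V 0 ⊆ U)
    (hγ : ∀ f, ∃ n, f⁻¹ * γ n ∈ U) (M : ℝ≥0) :
    IsCoveredByFUPow U {g | stepCost U V γ g < M} := by
  set T := γ '' Iio ⌈M⌉₊
  have hT : T.Finite := (finite_Iio _).image γ
  refine ⟨insert 1 (T ∪ T⁻¹), (hT.union hT.inv).insert 1, 3, by norm_num, fun g hg => ?_⟩
  rcases mem_or_mem_jumpSet_of_stepCost_lt hU1 hU hγ hg with hg0 | ⟨n, hn, hgn⟩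
  · have h1 : (1 : G) ∈ insert 1 (T ∪ T⁻¹) * U := ⟨1, mem_insert _ _, 1, hU1, mul_one 1⟩
    rw [pow_three']
    exact ⟨_, mul_mem_mul ⟨1, mem_insert _ _, g, hV0 hg0, one_mul g⟩ h1, 1, h1, by simp⟩
  · have hγn : γ n ∈ T := mem_image_of_mem γ (Nat.lt_ceil.2 hn)
    refine jumpSet_subset_pow_three hU1 hU (mem_insert _ _) (Or.inr (Or.inl hγn)) ?_ hgn
    exact Or.inr (Or.inr (by simpa using hγn))

lemma isCoveredByFUPow_lengthDist_lt (hU1 : (1 : G) ∈ U) (hU : U⁻¹ = U) (hV : IsCubeChain V)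
    (hV0 : V 0 ⊆ U) (hγ : ∀ f, ∃ n, f⁻¹ * γ n ∈ U) (r : ℝ≥0) :
    IsCoveredByFUPow U {g | lengthDist (stepCost U V γ) 1 g < r} := by
  have hsmall : IsCoveredByFUPow U {g | lengthDist (stepCost U V γ) 1 g < 2⁻¹} := by
    refine isCoveredByFUPow_self.mono fun g hg => hV0 ?_
    have := mem_of_lengthDist_lt (n := 0) (x := 1) hV (by simpa using hg)
    simpa using this
  have hball (k : ℕ) :
      IsCoveredByFUPow U {g | lengthDist (stepCost U V γ) 1 g < (k + 1) * 2⁻¹} := by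
    induction k with
    | zero => simpa using hsmall
    | succ k ih =>
      have hr : ((k + 1 : ℕ) + 1 : ℝ≥0) * 2⁻¹ = (k + 1) * 2⁻¹ + 2⁻¹ := by
        push_cast
        ring
      rw [hr]
      exact ((ih.mul (isCoveredByFUPow_stepCost_lt hU1 hU hV0 hγ _)).mul hsmall).mono
        (setOf_lengthDist_lt_add_subset (stepCost_one hV) (stepCost_inv hV) (by positivity)
          (by norm_num))
  obtain ⟨k, hk⟩ := exists_nat_ge (2 * r)
  have hle : r ≤ (k + 1) * 2⁻¹ := by
    rw [← NNReal.coe_le_coe] at hk ⊢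
    push_cast at hk ⊢
    linarith
  exact (hball k).mono fun g (hg : _ < r) => hg.trans_le hle

lemma finiteDiam_of_isCoveredByFUPow (hU : U⁻¹ = U) (hV : IsCubeChain V)
    (hγ : ∀ f, ∃ n, f⁻¹ * γ n ∈ U) {A : Set G} (hA : IsCoveredByFUPow U A) :
    FiniteDiam (fun x y => (lengthDist (stepCost U V γ) x y : ℝ)) A := by
  obtain ⟨F, hF, k, -, hAF⟩ := hA
  choose idx hidx using hγ
  obtain ⟨N, hN⟩ := (hF.image idx).bddAbove
  have hFU : ∀ x ∈ F * U, lengthDist (stepCost U V γ) 1 x ≤ N + 1 := by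
    rintro _ ⟨f, hf, u, hu, rfl⟩
    calc lengthDist (stepCost U V γ) 1 (f * u) ≤ stepCost U V γ (f * u) := by
          simpa using lengthDist_le (stepCost U V γ) 1 (f * u)
      _ ≤ idx f + 1 := stepCost_le_of_mem_jumpSet (mul_mem_jumpSet hU (hidx f) hu)
      _ ≤ N + 1 := by gcongr; exact hN (mem_image_of_mem idx hf)
  have hbound := le_mul_of_mem_pow (lengthDist_self (stepCost_one hV) 1)
    (lengthDist_one_mul_le (stepCost_one hV) (stepCost_inv hV)) hFU k
  refine ⟨2 * (k * (N + 1)), fun x hx y hy => ?_⟩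
  have hxy : lengthDist (stepCost U V γ) x y ≤ 2 * (k * (N + 1)) :=
    calc lengthDist (stepCost U V γ) x y
        ≤ lengthDist (stepCost U V γ) x 1 + lengthDist (stepCost U V γ) 1 y :=
          lengthDist_triangle (stepCost_one hV) (stepCost_inv hV) x 1 y
      _ = lengthDist (stepCost U V γ) 1 x + lengthDist (stepCost U V γ) 1 y := by
          rw [lengthDist_comm (stepCost_one hV) (stepCost_inv hV) x 1]
      _ ≤ k * (N + 1) + k * (N + 1) := add_le_add (hbound x (hAF hx)) (hbound y (hAF hy))
      _ = 2 * (k * (N + 1)) := (two_mul _).symm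
  exact_mod_cast hxy

lemma isCoveredByFUPow_of_finiteDiam (hU1 : (1 : G) ∈ U) (hU : U⁻¹ = U) (hV : IsCubeChain V)
    (hV0 : V 0 ⊆ U) (hγ : ∀ f, ∃ n, f⁻¹ * γ n ∈ U) {A : Set G}
    (hA : FiniteDiam (fun x y => (lengthDist (stepCost U V γ) x y : ℝ)) A) :
    IsCoveredByFUPow U A := by
  rcases A.eq_empty_or_nonempty with rfl | ⟨a, ha⟩
  · exact (isCoveredByFUPow_singleton hU1 1).mono (empty_subset _)
  obtain ⟨C, hC⟩ := hA
  refine ((isCoveredByFUPow_singleton hU1 a).mul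
    (isCoveredByFUPow_lengthDist_lt hU1 hU hV hV0 hγ (C.toNNReal + 1))).mono fun x hx => ?_
  refine ⟨a, rfl, a⁻¹ * x, ?_, mul_inv_cancel_left a x⟩
  show lengthDist (stepCost U V γ) 1 (a⁻¹ * x) < C.toNNReal + 1
  have hax : (lengthDist (stepCost U V γ) a x : ℝ) ≤ C := hC a ha x hx
  rw [← lengthDist_eq_lengthDist_one, ← NNReal.coe_lt_coe, NNReal.coe_add, NNReal.coe_one,
    Real.coe_toNNReal']
  linarith [le_max_left C 0]

end CoarseMetric

section Topology

variable {G : Type*} [Group G] [TopologicalSpace G] [IsTopologicalGroup G]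

lemma exists_isCubeChain_hasBasis [FirstCountableTopology G] {U : Set G} (hU : U ∈ 𝓝 1) :
    ∃ V : ℕ → Set G,
      IsCubeChain V ∧ (𝓝 (1 : G)).HasBasis (fun _ => True) V ∧ V 0 ⊆ U := by
  obtain ⟨u, hu, hu_sq⟩ := IsTopologicalGroup.exists_antitone_basis_nhds_one G
  obtain ⟨N, hN⟩ := hu.mem_iff.1 hU
  have hcube (k : ℕ) {a b c : G} (ha : a ∈ u (k + 2)) (hb : b ∈ u (k + 2))
      (hc : c ∈ u (k + 2)) : a * b * c ∈ u k :=
    hu_sq k (mul_mem_mul (hu_sq (k + 1) (mul_mem_mul ha hb)) (hu.antitone (Nat.le_succ _) hc))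
  refine ⟨fun n => u (2 * n + N) ∩ (u (2 * n + N))⁻¹,
    ⟨fun n => ?_, fun n => ?_, fun n => ?_⟩,
    hu.1.to_hasBasis'
      (fun i _ => ⟨i, trivial, inter_subset_left.trans (hu.antitone (by omega))⟩)
      (fun n _ => inter_mem (hu.mem _) (inv_mem_nhds_one G (hu.mem _))),
    inter_subset_left.trans (hu.antitone (by omega) |>.trans hN)⟩
  · exact ⟨mem_of_mem_nhds (hu.mem _), by simpa using mem_of_mem_nhds (hu.mem (2 * n + N))⟩
  · rw [inter_inv, inv_inv, inter_comm]
  · rintro _ ⟨_, ⟨a, ha, b, hb, rfl⟩, c, hc, rfl⟩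
    have hk : 2 * (n + 1) + N = 2 * n + N + 2 := by ring
    rw [hk] at ha hb hc
    refine ⟨hcube _ ha.1 hb.1 hc.1, ?_⟩
    simpa [mul_assoc] using hcube _ hc.2 hb.2 ha.2

lemma isCompatible_of_hasBasis {d : G → G → ℝ} (hd : ∀ h g f, d (h * g) (h * f) = d g f)
    (hb : (𝓝 (1 : G)).HasBasis (fun ε : ℝ => 0 < ε) fun ε => {g | d 1 g < ε}) :
    IsCompatible G d := by
  intro x s
  rw [← map_mul_left_nhds_one x, (hb.map _).mem_iff]
  refine exists_congr fun ε => and_congr_right' ?_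
  have hball : (fun y => x * y) '' {g | d 1 g < ε} = {y | d x y < ε} := by
    ext y
    rw [image_mul_left]
    show d 1 (x⁻¹ * y) < ε ↔ d x y < ε
    rw [← hd x, mul_one, mul_inv_cancel_left]
  rw [hball]

lemma isCompatibleLeftInvariantMetric_lengthDist_stepCost [T1Space G] {U : Set G}
    {V : ℕ → Set G} {γ : ℕ → G} (hV : IsCubeChain V)
    (hVb : (𝓝 (1 : G)).HasBasis (fun _ => True) V) :
    IsCompatibleLeftInvariantMetric G fun x y => (lengthDist (stepCost U V γ) x y : ℝ) := by
  have hinv : ∀ h g f, (lengthDist (stepCost U V γ) (h * g) (h * f) : ℝ) =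
      lengthDist (stepCost U V γ) g f := fun h g f => by
    rw [lengthDist_mul_left]
  have hb : (𝓝 (1 : G)).HasBasis (fun ε : ℝ => 0 < ε)
      fun ε => {g | (lengthDist (stepCost U V γ) 1 g : ℝ) < ε} := by
    refine hVb.to_hasBasis (fun n _ => ⟨2⁻¹ ^ (n + 1), by positivity, fun g hg => ?_⟩)
      fun ε hε => ?_
    · have hlt : lengthDist (stepCost U V γ) 1 g < 2⁻¹ ^ (n + 1) := by exact_mod_cast hg
      simpa using mem_of_lengthDist_lt hV hlt
    · obtain ⟨n, hn⟩ := exists_pow_lt_of_lt_one hε (by norm_num : (2⁻¹ : ℝ) < 1)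
      refine ⟨n, trivial, fun g hg => ?_⟩
      have hle : (lengthDist (stepCost U V γ) 1 g : ℝ) ≤ 2⁻¹ ^ (n + 1) := by
        exact_mod_cast lengthDist_le_of_mem hV (by simpa using hg)
      exact hle.trans_lt ((pow_le_pow_of_le_one (by norm_num) (by norm_num) n.le_succ).trans_lt hn)
  refine ⟨⟨fun x y => ⟨fun h => ?_, ?_⟩, fun x y => ?_, fun x y z => ?_⟩,
    isCompatible_of_hasBasis hinv hb, hinv⟩
  · replace h : lengthDist (stepCost U V γ) x y = 0 := by simpa using h
    have hmem : ∀ s ∈ 𝓝 (1 : G), x⁻¹ * y ∈ s := fun s hs =>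
      let ⟨ε, hε, hεs⟩ := hb.mem_iff.1 hs
      hεs (show (lengthDist (stepCost U V γ) 1 (x⁻¹ * y) : ℝ) < ε by
        rwa [← lengthDist_eq_lengthDist_one, h])
    by_contra hxy
    exact hmem _ (isOpen_compl_singleton.mem_nhds (Ne.symm (mt inv_mul_eq_one.1 hxy))) rfl
  · rintro rfl
    simp [lengthDist_self (stepCost_one hV)]
  · exact congrArg _ (lengthDist_comm (stepCost_one hV) (stepCost_inv hV) x y)
  · exact_mod_cast lengthDist_triangle (stepCost_one hV) (stepCost_inv hV) x y z

end Topology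

theorem exists_metric_finite_diam_iff_covered_by_FU_pow {G : Type*} [Group G]
    [TopologicalSpace G] [IsTopologicalGroup G] [TopologicalSpace.MetrizableSpace G]
    [TopologicalSpace.SeparableSpace G]
    (U : Set G) (hUopen : IsOpen U) (hU1 : (1 : G) ∈ U) (hUsym : U⁻¹ = U) :
    ∃ d : G → G → ℝ, IsCompatibleLeftInvariantMetric G d ∧
      ∀ A : Set G, FiniteDiam d A ↔
        ∃ F : Set G, F.Finite ∧ ∃ k : ℕ, 1 ≤ k ∧ A ⊆ (F * U) ^ k := by
  obtain ⟨V, hV, hVb, hV0⟩ := exists_isCubeChain_hasBasis (hUopen.mem_nhds hU1)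
  have : Nonempty G := ⟨1⟩
  have hγ (f : G) : ∃ n, f⁻¹ * TopologicalSpace.denseSeq G n ∈ U := by
    obtain ⟨n, hn⟩ := (TopologicalSpace.denseRange_denseSeq G).exists_mem_open (hUopen.smul f)
      ⟨f, by simpa using smul_mem_smul_set (a := f) hU1⟩
    exact ⟨n, mem_smul_set_iff_inv_smul_mem.1 hn⟩
  exact ⟨_, isCompatibleLeftInvariantMetric_lengthDist_stepCost hV hVb, fun A =>
    ⟨isCoveredByFUPow_of_finiteDiam hU1 hUsym hV hV0 hγ,
      finiteDiam_of_isCoveredByFUPow hUsym hV hγ⟩⟩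
end

section
/- Let H = G_1 × G_2 × ⋯ be the product of a sequence of metrisable topological groups G_n, equipped with the product topology. A sequence (h_m) in H tends to infinity in H if and only if there is some k so that the sequence of projections proj_{G_1×⋯×G_k}(h_m) tends to infinity in the finite product G_1 × ⋯ × G_k. -/
open Filter Topology
open scoped Pointwise

/-!
A compatible left-invariant metric `D` on `H = ∏ Gₙ` has a unit ball at `1` that, being a
neighbourhood in the product topology, contains every element trivial on the first `k`
coordinates. Hence `hₘ` lies within distance `1` of the element `σ(π hₘ)` obtained by truncating
to the first `k` coordinates and padding with `1`, and pulling `D` back along the embedding `σ`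
gives a metric on `G₁ × ⋯ × Gₖ` in which the truncations go to infinity. Conversely, if `d`
witnesses that the truncations go to infinity, then `d ∘ π + e` does so for `(hₘ)`, where `e` is
any compatible left-invariant metric on `H`. Such an `e` exists by Birkhoff–Kakutani: the
supremum over left translates of a bounded metric inducing the left uniformity is one.
-/

open Uniformity

theorem IsMetric.nonneg {G : Type*} {d : G → G → ℝ} (hd : IsMetric d) (x y : G) :
    0 ≤ d x y := by
  have := hd.2.2 x y x
  rw [(hd.1 x x).2 rfl, hd.2.1 y x] at this
  linarith

namespace IsCompatible

variable {G : Type*} [TopologicalSpace G] {d : G → G → ℝ}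

theorem hasBasis (hd : IsCompatible G d) (x : G) :
    (𝓝 x).HasBasis (fun ε : ℝ => 0 < ε) fun ε => {y | d x y < ε} :=
  ⟨hd x⟩

theorem of_hasBasis
    (h : ∀ x, (𝓝 x).HasBasis (fun ε : ℝ => 0 < ε) fun ε => {y | d x y < ε}) :
    IsCompatible G d :=
  fun x _ => (h x).mem_iff

end IsCompatible

theorem min_one_le_min_one_add {a b c : ℝ} (hb : 0 ≤ b) (hc : 0 ≤ c) (h : a ≤ b + c) :
    min 1 a ≤ min 1 b + min 1 c := by
  simp only [min_def]
  split_ifs <;> linarith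

section LeftInvariantDist

variable {G : Type*} [Group G] [PseudoMetricSpace G]

/-- Capping at `1` keeps the family bounded, so that the supremum is not a junk value. -/
noncomputable def leftInvariantDist (x y : G) : ℝ :=
  ⨆ g : G, min 1 (dist (g * x) (g * y))

theorem min_one_dist_le_leftInvariantDist (g x y : G) :
    min 1 (dist (g * x) (g * y)) ≤ leftInvariantDist x y :=
  le_ciSup (f := fun g : G => min (1 : ℝ) (dist (g * x) (g * y)))
    ⟨1, by rintro _ ⟨g, rfl⟩; exact min_le_left _ _⟩ g

theorem leftInvariantDist_le {x y : G} {c : ℝ}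
    (h : ∀ g : G, min 1 (dist (g * x) (g * y)) ≤ c) : leftInvariantDist x y ≤ c :=
  ciSup_le h

theorem leftInvariantDist_mul_left (h x y : G) :
    leftInvariantDist (h * x) (h * y) = leftInvariantDist x y := by
  simp only [leftInvariantDist, ← mul_assoc]
  exact (Equiv.mulRight h).iSup_comp (g := fun g => min 1 (dist (g * x) (g * y)))

theorem min_one_dist_le_leftInvariantDist' (x y : G) :
    min 1 (dist x y) ≤ leftInvariantDist x y := by
  simpa using min_one_dist_le_leftInvariantDist 1 x y

theorem isMetric_leftInvariantDist [T0Space G] : IsMetric (leftInvariantDist (G := G)) := by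
  refine ⟨fun x y => ⟨fun hxy => ?_, ?_⟩, fun x y => ?_, fun x y z => ?_⟩
  · have : min 1 (dist x y) = 0 :=
      le_antisymm (hxy ▸ min_one_dist_le_leftInvariantDist' x y) (le_min zero_le_one dist_nonneg)
    exact (Metric.inseparable_iff.2 ((min_eq_iff.1 this).resolve_left (by norm_num)).1).eq
  · rintro rfl
    exact le_antisymm (leftInvariantDist_le fun g => by simp)
      ((le_min zero_le_one dist_nonneg).trans (min_one_dist_le_leftInvariantDist' x x))
  · simp only [leftInvariantDist, dist_comm]
  · refine leftInvariantDist_le fun g => (min_one_le_min_one_add dist_nonneg dist_nonneg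
      (dist_triangle _ (g * y) _)).trans ?_
    exact add_le_add (min_one_dist_le_leftInvariantDist g x y)
      (min_one_dist_le_leftInvariantDist g y z)

variable [IsTopologicalGroup G]

theorem isCompatible_leftInvariantDist
    (hU : 𝓤 G = comap (fun p : G × G => p.1⁻¹ * p.2) (𝓝 1)) :
    IsCompatible G leftInvariantDist := by
  refine .of_hasBasis fun x => Metric.nhds_basis_ball.to_hasBasis'
    (fun ε hε => ⟨min 1 ε, lt_min one_pos hε, fun y hy => ?_⟩) (fun ε hε => ?_)
  · have : min 1 (dist x y) < min 1 ε := (min_one_dist_le_leftInvariantDist' x y).trans_lt hy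
    rw [Metric.mem_ball, dist_comm]
    by_contra! hle
    exact this.not_ge (min_le_min_left 1 hle)
  · obtain ⟨U, hU1, hUsub⟩ := mem_comap.1 (hU ▸ Metric.dist_mem_uniformity (half_pos hε))
    refine mem_of_superset (nhds_translation_inv_mul x ▸ preimage_mem_comap hU1) fun y hy => ?_
    refine (leftInvariantDist_le fun g => (min_le_right _ _).trans (le_of_lt ?_)).trans_lt
      (half_lt_self hε)
    have hgxy : (g * x)⁻¹ * (g * y) ∈ U := by simpa [mul_assoc] using hy
    exact @hUsub (g * x, g * y) hgxy

theorem isCompatibleLeftInvariantMetric_leftInvariantDist [T0Space G]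
    (hU : 𝓤 G = comap (fun p : G × G => p.1⁻¹ * p.2) (𝓝 1)) :
    IsCompatibleLeftInvariantMetric G leftInvariantDist :=
  ⟨isMetric_leftInvariantDist, isCompatible_leftInvariantDist hU, leftInvariantDist_mul_left⟩

end LeftInvariantDist

theorem exists_isCompatibleLeftInvariantMetric (G : Type*) [Group G] [TopologicalSpace G]
    [IsTopologicalGroup G] [FirstCountableTopology G] [T0Space G] :
    ∃ d, IsCompatibleLeftInvariantMetric G d := by
  let _ := IsTopologicalGroup.leftUniformSpace G
  have : IsCountablyGenerated (𝓤 G) := Filter.comap.isCountablyGenerated _ _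
  let _ := UniformSpace.pseudoMetricSpace G
  exact ⟨_, isCompatibleLeftInvariantMetric_leftInvariantDist rfl⟩

namespace IsCompatibleLeftInvariantMetric

variable {H K : Type*} [Group H] [TopologicalSpace H] [Group K] [TopologicalSpace K]

theorem comap {D : K → K → ℝ} (hD : IsCompatibleLeftInvariantMetric K D) (ψ : H →* K)
    (hψ : IsEmbedding ψ) : IsCompatibleLeftInvariantMetric H fun x y => D (ψ x) (ψ y) := by
  obtain ⟨⟨hzero, hsymm, htri⟩, hcompat, hinv⟩ := hD
  refine ⟨⟨fun x y => (hzero _ _).trans hψ.injective.eq_iff, fun x y => hsymm _ _,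
    fun x y z => htri _ _ _⟩, .of_hasBasis fun x => ?_,
    fun h x y => by simp only [map_mul, hinv]⟩
  rw [hψ.isInducing.nhds_eq_comap]
  exact (hcompat.hasBasis (ψ x)).comap ψ

theorem add_comap {e : H → H → ℝ} (he : IsCompatibleLeftInvariantMetric H e)
    {d : K → K → ℝ} (hd : IsCompatibleLeftInvariantMetric K d) (φ : H →* K)
    (hφ : Continuous φ) :
    IsCompatibleLeftInvariantMetric H fun x y => d (φ x) (φ y) + e x y := by
  have he0 := he.1.nonneg
  have hd0 := hd.1.nonneg
  obtain ⟨⟨hezero, hesymm, hetri⟩, hecompat, heinv⟩ := he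
  obtain ⟨⟨hdzero, hdsymm, hdtri⟩, hdcompat, hdinv⟩ := hd
  refine ⟨⟨fun x y => ⟨fun hxy => ?_, ?_⟩, fun x y => by dsimp only; rw [hdsymm, hesymm],
    fun x y z => by linarith [hdtri (φ x) (φ y) (φ z), hetri x y z]⟩,
    .of_hasBasis fun x => (hecompat.hasBasis x).to_hasBasis'
      (fun ε hε => ⟨ε, hε, fun y hy => ?_⟩) (fun ε hε => ?_),
    fun h x y => by simp only [map_mul, hdinv, heinv]⟩
  · exact (hezero x y).1 (le_antisymm (by linarith [hd0 (φ x) (φ y)]) (he0 x y))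
  · rintro rfl
    dsimp only
    rw [(hdzero _ _).2 rfl, (hezero _ _).2 rfl, add_zero]
  · exact lt_of_le_of_lt (le_add_of_nonneg_left (hd0 _ _)) hy
  · have hdball := hφ.continuousAt.preimage_mem_nhds
      ((hdcompat.hasBasis (φ x)).mem_of_mem (half_pos hε))
    have heball := (hecompat.hasBasis x).mem_of_mem (half_pos hε)
    filter_upwards [hdball, heball] with y hdy hey
    exact (add_lt_add hdy hey).trans_eq (add_halves ε)

end IsCompatibleLeftInvariantMetric

theorem TendsToInfinity.of_map {H K : Type*} [Group H] [TopologicalSpace H]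
    [IsTopologicalGroup H] [FirstCountableTopology H] [T0Space H] [Group K] [TopologicalSpace K]
    (φ : H →* K) (hφ : Continuous φ) {h : ℕ → H} (hh : TendsToInfinity K (φ ∘ h)) :
    TendsToInfinity H h := by
  obtain ⟨d, hd, hdh⟩ := hh
  obtain ⟨e, he⟩ := exists_isCompatibleLeftInvariantMetric H
  refine ⟨_, he.add_comap hd φ hφ, tendsto_atTop_mono (fun m => ?_) hdh⟩
  rw [map_one]
  exact le_add_of_nonneg_right (he.1.nonneg _ _)

theorem TendsToInfinity.of_dist_image_le {H K : Type*} [Group H] [TopologicalSpace H] [Group K]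
    [TopologicalSpace K] {D : K → K → ℝ} (hD : IsCompatibleLeftInvariantMetric K D) (ψ : H →* K)
    (hψ : IsEmbedding ψ) {g : ℕ → K} (hg : Tendsto (fun m => D (g m) 1) atTop atTop)
    {p : ℕ → H} {C : ℝ} (hC : ∀ m, D (g m) (ψ (p m)) ≤ C) : TendsToInfinity H p := by
  refine ⟨_, hD.comap ψ hψ,
    tendsto_atTop_mono (fun m => ?_) (tendsto_atTop_add_const_right _ (-C) hg)⟩
  have := hD.1.2.2 (g m) (ψ (p m)) 1
  rw [map_one]
  linarith [hC m]

section FiniteTruncation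

variable {G : ℕ → Type*} [∀ n, Group (G n)]

def piTruncate (k : ℕ) : (∀ n, G n) →* ∀ i : Fin k, G i where
  toFun x i := x i
  map_one' := rfl
  map_mul' _ _ := rfl

def piExtendOne (k : ℕ) : (∀ i : Fin k, G i) →* ∀ n, G n where
  toFun p n := if hn : n < k then p ⟨n, hn⟩ else 1
  map_one' := by ext n; split_ifs <;> rfl
  map_mul' p q := by ext n; dsimp only [Pi.mul_apply]; split_ifs <;> simp

theorem piTruncate_piExtendOne (k : ℕ) (p : ∀ i : Fin k, G i) :
    piTruncate k (piExtendOne k p) = p := by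
  ext i
  simp [piTruncate, piExtendOne, i.isLt]

theorem piExtendOne_piTruncate_apply {k n : ℕ} (hn : n < k) (x : ∀ n, G n) :
    piExtendOne k (piTruncate k x) n = x n := by
  simp [piTruncate, piExtendOne, hn]

variable [∀ n, TopologicalSpace (G n)]

theorem continuous_piTruncate (k : ℕ) : Continuous (piTruncate (G := G) k) :=
  continuous_pi fun i => continuous_apply i.val

theorem continuous_piExtendOne (k : ℕ) : Continuous (piExtendOne (G := G) k) := by
  refine continuous_pi fun n => ?_
  by_cases hn : n < k
  · simpa [piExtendOne, hn] using continuous_apply (⟨n, hn⟩ : Fin k)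
  · simpa [piExtendOne, hn] using continuous_const

theorem isEmbedding_piExtendOne (k : ℕ) : IsEmbedding (piExtendOne (G := G) k) :=
  Function.LeftInverse.isEmbedding (piTruncate_piExtendOne k) (continuous_piTruncate k)
    (continuous_piExtendOne k)

theorem eventually_forall_mem_of_mem_nhds_one {s : Set (∀ n, G n)} (hs : s ∈ 𝓝 1) :
    ∀ᶠ k in atTop, ∀ x : ∀ n, G n, (∀ n < k, x n = 1) → x ∈ s := by
  rw [nhds_pi, mem_pi] at hs
  obtain ⟨I, hI, t, ht, hIt⟩ := hs
  obtain ⟨N, hN⟩ := hI.bddAbove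
  filter_upwards [eventually_gt_atTop N] with k hk x hx
  exact hIt fun n hn => (hx n ((hN hn).trans_lt hk)).symm ▸ mem_of_mem_nhds (ht n)

end FiniteTruncation

theorem tendsToInfinity_in_product_iff_finite_projection
    {G : ℕ → Type*} [∀ n, Group (G n)] [∀ n, TopologicalSpace (G n)]
    [∀ n, IsTopologicalGroup (G n)] [∀ n, TopologicalSpace.MetrizableSpace (G n)]
    (h : ℕ → ∀ n, G n) :
    TendsToInfinity (∀ n, G n) h ↔
      ∃ k : ℕ, 0 < k ∧
        TendsToInfinity (∀ i : Fin k, G i.val) (fun m (i : Fin k) => h m i.val) := by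
  constructor
  · rintro ⟨D, hD, hDh⟩
    obtain ⟨k, hball, hk⟩ := ((eventually_forall_mem_of_mem_nhds_one
      ((hD.2.1.hasBasis 1).mem_of_mem one_pos)).and (eventually_gt_atTop 0)).exists
    refine ⟨k, hk, .of_dist_image_le hD (piExtendOne k) (isEmbedding_piExtendOne k) hDh
      (C := 1) fun m => ?_⟩
    rw [← hD.2.2 (h m)⁻¹, inv_mul_cancel]
    refine le_of_lt (hball _ fun n hn => ?_)
    rw [Pi.mul_apply, Pi.inv_apply, inv_mul_eq_one]
    exact (piExtendOne_piTruncate_apply hn (h m)).symm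
  · rintro ⟨k, -, hk⟩
    exact TendsToInfinity.of_map (piTruncate k) (continuous_piTruncate k) hk
end

section
/- Let G_1, G_2, … be an infinite sequence of metrisable topological groups, each failing property (OB) (i.e., each G_n contains a sequence tending to infinity in G_n), and set H = G_1 × G_2 × ⋯ with the product topology. Then there is a sequence (h_m) of elements of H which eventually leaves every subset of H having property (OB) relative to H, but which does not tend to infinity in H. -/
open Filter Topology
open scoped Pointwise

/-!
Choose compatible left-invariant metrics `d n` on the factors and points `a n t` with
`t ≤ d n (a n t) 1`. For `m = pair N j` let `h m` agree with `a n N` in the coordinates `n ≤ N`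
and with `a n m` beyond. The maximum of a product metric and `d k` on the `k`-th coordinate is a
compatible left-invariant metric on `H`, so a set with property (OB) relative to `H` has bounded
`k`-th coordinates for every `k`; bounding coordinate `0` bounds `N`, and then coordinate `N + 1`
bounds `m`. On the other hand, every compatible metric on `H` is `< 1` between points agreeing in
the first few coordinates, so for a suitable `N` the infinitely many terms `h (pair N j)` stay at
bounded distance from `1`.
-/

section MetricSpace
variable {X : Type*}

theorem isMetric_dist [MetricSpace X] : IsMetric (dist : X → X → ℝ) :=
  ⟨fun _ _ => dist_eq_zero, dist_comm, dist_triangle⟩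

theorem isCompatible_dist [PseudoMetricSpace X] : IsCompatible X dist := fun x s => by
  simp only [Metric.mem_nhds_iff, Metric.ball, dist_comm x]

abbrev IsMetric.toMetricSpace [TopologicalSpace X] {d : X → X → ℝ} (hd : IsMetric d)
    (hc : IsCompatible X d) : MetricSpace X :=
  .ofDistTopology d (fun x => (hd.1 x x).2 rfl) hd.2.1 hd.2.2
    (fun s => isOpen_iff_mem_nhds.trans (forall₂_congr fun x _ => hc x s))
    (fun x y => (hd.1 x y).1)

end MetricSpace

section Product
variable {G : ℕ → Type*} [∀ n, Group (G n)] [∀ n, TopologicalSpace (G n)]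

theorem exists_isCompatibleLeftInvariantMetric_ge_coord {d : ∀ n, G n → G n → ℝ}
    (hd : ∀ n, IsCompatibleLeftInvariantMetric (G n) (d n)) (k : ℕ) :
    ∃ D, IsCompatibleLeftInvariantMetric (∀ n, G n) D ∧ ∀ x y, d k (x k) (y k) ≤ D x y := by
  let _ (n : ℕ) : MetricSpace (G n) := (hd n).1.toMetricSpace (hd n).2.1
  let _ : MetricSpace (∀ n, G n) := PiCountable.metricSpace
  have hP (h x y : ∀ n, G n) : dist (h * x) (h * y) = dist x y := by
    simp only [PiCountable.dist_eq_tsum, Pi.mul_apply]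
    exact tsum_congr fun n => congrArg _ ((hd n).2.2 _ _ _)
  have hemb : Topology.IsEmbedding (fun x : ∀ n, G n => (x, x k)) :=
    isEmbedding_graph (continuous_apply k)
  -- From here on `dist x y` is `max (dist x y) (d k (x k) (y k))`, with the `PiCountable` metric.
  let _ : MetricSpace (∀ n, G n) := hemb.comapMetricSpace
  exact ⟨dist, ⟨isMetric_dist, isCompatible_dist,
    fun h x y => congrArg₂ max (hP h x y) ((hd k).2.2 _ _ _)⟩, fun x y => le_max_right _ _⟩

theorem HasRelPropOB.exists_bound_coord {d : ∀ n, G n → G n → ℝ}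
    (hd : ∀ n, IsCompatibleLeftInvariantMetric (G n) (d n)) {A : Set (∀ n, G n)}
    (hA : HasRelPropOB (∀ n, G n) A) (k : ℕ) (z : G k) : ∃ C, ∀ x ∈ A, d k (x k) z ≤ C := by
  obtain ⟨D, hD, hdD⟩ := exists_isCompatibleLeftInvariantMetric_ge_coord hd k
  obtain ⟨C, hC⟩ := hA D hD
  rcases A.eq_empty_or_nonempty with rfl | ⟨y, hy⟩
  · exact ⟨0, by simp⟩
  refine ⟨C + d k (y k) z, fun x hx => ?_⟩
  linarith [(hd k).1.2.2 (x k) (y k) z, hdD x y, hC x hx y hy]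

theorem IsCompatibleLeftInvariantMetric.exists_lt_one_of_eqOn_Iic
    {D : (∀ n, G n) → (∀ n, G n) → ℝ} (hD : IsCompatibleLeftInvariantMetric (∀ n, G n) D) :
    ∃ N, ∀ x y : ∀ n, G n, (∀ n ≤ N, x n = y n) → D x y < 1 := by
  have hball := (hD.2.1 1 {y | D 1 y < 1}).2 ⟨1, one_pos, subset_rfl⟩
  rw [nhds_pi, Filter.mem_pi] at hball
  obtain ⟨I, hI, t, ht, hsub⟩ := hball
  obtain ⟨N, hN⟩ := hI.bddAbove
  refine ⟨N, fun x y hxy => ?_⟩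
  have hmem : x⁻¹ * y ∈ I.pi t := fun n hn => by
    simpa [hxy n (hN hn)] using mem_of_mem_nhds (ht n)
  calc D x y = D 1 (x⁻¹ * y) := by rw [← hD.2.2 x⁻¹ x y, inv_mul_cancel]
    _ < 1 := hsub hmem

end Product

section DiagonalSequence
variable {G : ℕ → Type*}

def diagSeq (a : ∀ n, ℕ → G n) (m : ℕ) : ∀ n, G n :=
  fun n => if n ≤ m.unpair.1 then a n m.unpair.1 else a n m

theorem finite_setOf_diagSeq_mem {a : ∀ n, ℕ → G n} {f : ∀ n, G n → ℝ}
    (ha : ∀ n (t : ℕ), t ≤ f n (a n t)) {A : Set (∀ n, G n)}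
    (hA : ∀ k, ∃ C, ∀ x ∈ A, f k (x k) ≤ C) : {m | diagSeq a m ∈ A}.Finite := by
  choose C hC using hA
  have hfst (m : ℕ) (hm : diagSeq a m ∈ A) : m.unpair.1 ≤ ⌊C 0⌋₊ := by
    refine Nat.le_floor ((ha 0 _).trans ?_)
    simpa [diagSeq] using hC 0 _ hm
  have hsnd (m : ℕ) (hm : diagSeq a m ∈ A) : m ≤ ⌊C (m.unpair.1 + 1)⌋₊ := by
    refine Nat.le_floor ((ha (m.unpair.1 + 1) m).trans ?_)
    simpa [diagSeq] using hC (m.unpair.1 + 1) _ hm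
  exact ((Set.finite_Iic ⌊C 0⌋₊).biUnion fun N _ => Set.finite_Iic ⌊C (N + 1)⌋₊).subset
    fun m hm => Set.mem_biUnion (hfst m hm) (hsnd m hm)

theorem not_tendsToInfinity_diagSeq [∀ n, Group (G n)] [∀ n, TopologicalSpace (G n)]
    (a : ∀ n, ℕ → G n) : ¬ TendsToInfinity (∀ n, G n) (diagSeq a) := by
  rintro ⟨D, hD, hto⟩
  obtain ⟨N, hN⟩ := hD.exists_lt_one_of_eqOn_Iic
  set c := diagSeq a (Nat.pair N 0)
  have hbdd (j : ℕ) : D (diagSeq a (Nat.pair N j)) 1 < 1 + D c 1 := by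
    have hagree : ∀ n ≤ N, diagSeq a (Nat.pair N j) n = c n := fun n hn => by
      simp [c, diagSeq, hn]
    linarith [hD.1.2.2 (diagSeq a (Nat.pair N j)) c 1, hN _ _ hagree]
  have hpair : Tendsto (Nat.pair N) atTop atTop :=
    tendsto_atTop_mono (Nat.right_le_pair N) tendsto_id
  obtain ⟨j, hj⟩ := ((hto.comp hpair).eventually_gt_atTop (1 + D c 1)).exists
  exact (hj.trans (hbdd j)).false

end DiagonalSequence

theorem exists_seq_leaving_relOB_sets_but_not_tendsToInfinity_general
    {G : ℕ → Type*} [∀ n, Group (G n)] [∀ n, TopologicalSpace (G n)]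
    (hfail : ∀ n, ∃ g : ℕ → G n, TendsToInfinity (G n) g) :
    ∃ h : ℕ → ∀ n, G n,
      (∀ A : Set (∀ n, G n), HasRelPropOB (∀ n, G n) A → ∃ N, ∀ m ≥ N, h m ∉ A) ∧
      ¬ TendsToInfinity (∀ n, G n) h := by
  choose g d hd htend using hfail
  have hunbdd (n t : ℕ) : ∃ x, (t : ℝ) ≤ d n x 1 :=
    ⟨g n _, (tendsto_atTop.1 (htend n) t).exists.choose_spec⟩
  choose a ha using hunbdd
  refine ⟨diagSeq a, fun A hA => ?_, not_tendsToInfinity_diagSeq a⟩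
  have hfin := finite_setOf_diagSeq_mem (f := fun n x => d n x 1) ha
    fun k => hA.exists_bound_coord hd k 1
  simpa [Nat.cofinite_eq_atTop] using hfin.eventually_cofinite_notMem

theorem exists_seq_leaving_relOB_sets_but_not_tendsToInfinity
    {G : ℕ → Type*} [∀ n, Group (G n)] [∀ n, TopologicalSpace (G n)]
    [∀ n, IsTopologicalGroup (G n)] [∀ n, TopologicalSpace.MetrizableSpace (G n)]
    (hfail : ∀ n, ∃ g : ℕ → G n, TendsToInfinity (G n) g) :
    ∃ h : ℕ → ∀ n, G n,
      (∀ A : Set (∀ n, G n), HasRelPropOB (∀ n, G n) A → ∃ N, ∀ m ≥ N, h m ∉ A) ∧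
      ¬ TendsToInfinity (∀ n, G n) h :=
  exists_seq_leaving_relOB_sets_but_not_tendsToInfinity_general hfail
end

section
/- Let G be a metrisable topological group and d a metrically proper compatible left-invariant metric on G. The following are equivalent: (1) for every compatible right-invariant metric ∂ on G, the identity map (G,d) → (G,∂) is bornologous; (2) whenever a subset A ⊆ G has property (OB) relative to G, so does its conjugation closure A^G = {gag⁻¹ : a ∈ A, g ∈ G}. -/
open Filter Topology
open scoped Pointwise

/-- The closure of a set under conjugation: `A^G = {g a g⁻¹ : a ∈ A, g ∈ G}`. -/
def ConjClosure {G : Type*} [Group G] (A : Set G) : Set G :=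
  {x : G | ∃ a ∈ A, ∃ g : G, x = g * a * g⁻¹}

/-!
For a left-invariant `d` and a right-invariant `∂` one has `∂(g a g⁻¹, 1) = ∂(g a, g)` and
`d(g a, g) = d(a, 1)`, so the identity `(G, d) → (G, ∂)` is bornologous exactly when the
conjugates of every `d`-ball around `1` are uniformly `∂`-bounded. Inversion exchanges compatible
left- and right-invariant metrics without changing the distance to `1`, and metric properness of
`d` makes `d`-balls (OB) while (OB) sets are `d`-bounded; so both conditions say that conjugation
closures of `d`-bounded sets are bounded for every compatible left-invariant metric.
-/

def IsCompatibleRightInvariantMetric (G : Type*) [Group G] [TopologicalSpace G]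
    (e : G → G → ℝ) : Prop :=
  IsMetric e ∧ IsCompatible G e ∧ ∀ h g f : G, e (g * h) (f * h) = e g f

section Metric

variable {X : Type*} {d : X → X → ℝ}

lemma IsMetric.comp {Y : Type*} (hd : IsMetric d) {φ : Y → X} (hφ : Function.Injective φ) :
    IsMetric (fun x y => d (φ x) (φ y)) :=
  ⟨fun _ _ => (hd.1 _ _).trans hφ.eq_iff, fun _ _ => hd.2.1 _ _, fun _ _ _ => hd.2.2 _ _ _⟩

lemma IsCompatible.comp_homeomorph {Y : Type*} [TopologicalSpace X] [TopologicalSpace Y]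
    (hd : IsCompatible X d) (φ : Y ≃ₜ X) : IsCompatible Y (fun x y => d (φ x) (φ y)) := by
  intro x s
  rw [← image_mem_map_iff φ.injective, φ.map_nhds_eq, φ.image_eq_preimage_symm, hd]
  simp only [← Set.image_subset_iff, φ.image_symm]
  rfl

lemma finiteDiam_of_forall_le (hd : IsMetric d) {A : Set X} {z : X} {R : ℝ}
    (h : ∀ a ∈ A, d a z ≤ R) : FiniteDiam d A :=
  ⟨2 * R, fun x hx y hy => by linarith [hd.2.2 x z y, hd.2.1 z y, h x hx, h y hy]⟩

lemma FiniteDiam.exists_forall_le {A : Set X} (hA : FiniteDiam d A) (hd : IsMetric d) (z : X) :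
    ∃ R, ∀ a ∈ A, d a z ≤ R := by
  obtain ⟨C, hC⟩ := hA
  rcases A.eq_empty_or_nonempty with rfl | ⟨a₀, ha₀⟩
  · exact ⟨0, by simp⟩
  · exact ⟨C + d a₀ z, fun a ha => by linarith [hd.2.2 a a₀ z, hC a ha a₀ ha₀]⟩

end Metric

section Invariant

variable {G : Type*} [Group G] {d e : G → G → ℝ}

lemma dist_inv_one_of_mul_left (hsymm : ∀ x y, d x y = d y x)
    (hinv : ∀ h g f : G, d (h * g) (h * f) = d g f) (a : G) : d a⁻¹ 1 = d a 1 := by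
  simpa [hsymm 1 a] using (hinv a a⁻¹ 1).symm

lemma dist_inv_one_of_mul_right (hsymm : ∀ x y, d x y = d y x)
    (hinv : ∀ h g f : G, d (g * h) (f * h) = d g f) (a : G) : d a⁻¹ 1 = d a 1 := by
  simpa [hsymm 1 a] using (hinv a a⁻¹ 1).symm

variable [TopologicalSpace G] [ContinuousInv G]

lemma IsCompatibleLeftInvariantMetric.comp_inv (hd : IsCompatibleLeftInvariantMetric G d) :
    IsCompatibleRightInvariantMetric G (fun x y => d x⁻¹ y⁻¹) :=
  ⟨hd.1.comp inv_injective, hd.2.1.comp_homeomorph (Homeomorph.inv G),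
    fun h g f => by simpa only [mul_inv_rev] using hd.2.2 h⁻¹ g⁻¹ f⁻¹⟩

lemma IsCompatibleRightInvariantMetric.comp_inv (he : IsCompatibleRightInvariantMetric G e) :
    IsCompatibleLeftInvariantMetric G (fun x y => e x⁻¹ y⁻¹) :=
  ⟨he.1.comp inv_injective, he.2.1.comp_homeomorph (Homeomorph.inv G),
    fun h g f => by simpa only [mul_inv_rev] using he.2.2 h⁻¹ g⁻¹ f⁻¹⟩

end Invariant

lemma bornologous_iff_forall_conj_le {G : Type*} [Group G] {d e : G → G → ℝ}
    (hd : ∀ h g f : G, d (h * g) (h * f) = d g f) (he : ∀ h g f : G, e (g * h) (f * h) = e g f)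
    (R S : ℝ) :
    (∀ x y, d x y ≤ R → e x y ≤ S) ↔ ∀ a, d a 1 ≤ R → ∀ g, e (g * a * g⁻¹) 1 ≤ S := by
  have conj_eq : ∀ g a : G, e (g * a * g⁻¹) 1 = e (g * a) g := fun g a => by
    simpa using (he g (g * a * g⁻¹) 1).symm
  have translate_eq : ∀ g a : G, d (g * a) g = d a 1 := fun g a => by
    simpa using hd g a 1
  constructor
  · intro h a ha g
    exact conj_eq g a ▸ h _ _ (translate_eq g a ▸ ha)
  · intro h x y hxy
    obtain ⟨a, rfl⟩ : ∃ a, x = y * a := ⟨y⁻¹ * x, by group⟩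
    rw [← conj_eq]
    exact h a (translate_eq y a ▸ hxy) y

lemma MetricallyProperMetric.exists_forall_le {G : Type*} [Group G] [TopologicalSpace G]
    {d e : G → G → ℝ} (hproper : MetricallyProperMetric G d)
    (he : IsCompatibleLeftInvariantMetric G e) (R : ℝ) :
    ∃ C, ∀ a, d a 1 ≤ R → e a 1 ≤ C := by
  by_contra! h
  choose a ha hlt using fun n : ℕ => h n
  have hinf : TendsToInfinity G a :=
    ⟨e, he, tendsto_atTop_mono (fun n => (hlt n).le) tendsto_natCast_atTop_atTop⟩
  obtain ⟨n, hn⟩ := ((hproper a hinf).eventually_gt_atTop R).exists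
  exact (ha n).not_gt hn

lemma MetricallyProperMetric.hasRelPropOB_closedBall {G : Type*} [Group G] [TopologicalSpace G]
    {d : G → G → ℝ} (hproper : MetricallyProperMetric G d) (R : ℝ) :
    HasRelPropOB G {a | d a 1 ≤ R} := fun _ he =>
  let ⟨_, hC⟩ := hproper.exists_forall_le he R
  finiteDiam_of_forall_le he.1 hC

theorem left_to_right_bornologous_iff_conj_closure_OB_general {G : Type*} [Group G]
    [TopologicalSpace G] [IsTopologicalGroup G]
    (d : G → G → ℝ) (hd : IsCompatibleLeftInvariantMetric G d)
    (hproper : MetricallyProperMetric G d) :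
    (∀ e : G → G → ℝ,
        (IsMetric e ∧ IsCompatible G e ∧ ∀ h g f : G, e (g * h) (f * h) = e g f) →
        ∀ R > (0 : ℝ), ∃ S > (0 : ℝ), ∀ x y : G, d x y ≤ R → e x y ≤ S) ↔
      (∀ A : Set G, HasRelPropOB G A → HasRelPropOB G (ConjClosure A)) := by
  constructor
  · intro hborn A hA e he
    obtain ⟨R, hR⟩ := (hA d hd).exists_forall_le hd.1 1
    obtain ⟨S, -, hS⟩ := hborn _ he.comp_inv (max R 1) (lt_max_of_lt_right one_pos)
    have hconj := (bornologous_iff_forall_conj_le hd.2.2 he.comp_inv.2.2 _ _).1 hS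
    refine finiteDiam_of_forall_le he.1 (z := 1) (R := S) ?_
    rintro _ ⟨a, ha, g, rfl⟩
    simpa only [inv_one, dist_inv_one_of_mul_left he.1.2.1 he.2.2] using
      hconj a (le_max_of_le_left (hR a ha)) g
  · intro hOB e (he : IsCompatibleRightInvariantMetric G e) R _
    obtain ⟨C, hC⟩ := (hOB _ (hproper.hasRelPropOB_closedBall R) _ he.comp_inv).exists_forall_le
      he.comp_inv.1 1
    refine ⟨max C 1, lt_max_of_lt_right one_pos,
      (bornologous_iff_forall_conj_le hd.2.2 he.2.2 _ _).2 fun a ha g => ?_⟩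
    simpa only [inv_one, dist_inv_one_of_mul_right he.1.2.1 he.2.2] using
      le_max_of_le_left (hC _ ⟨a, ha, g, rfl⟩)

theorem left_to_right_bornologous_iff_conj_closure_OB {G : Type*} [Group G]
    [TopologicalSpace G] [IsTopologicalGroup G] [TopologicalSpace.MetrizableSpace G]
    (d : G → G → ℝ) (hd : IsCompatibleLeftInvariantMetric G d)
    (hproper : MetricallyProperMetric G d) :
    (∀ e : G → G → ℝ,
        (IsMetric e ∧ IsCompatible G e ∧ ∀ h g f : G, e (g * h) (f * h) = e g f) →
        ∀ R > (0 : ℝ), ∃ S > (0 : ℝ), ∀ x y : G, d x y ≤ R → e x y ≤ S) ↔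
      (∀ A : Set G, HasRelPropOB G A → HasRelPropOB G (ConjClosure A)) :=
  left_to_right_bornologous_iff_conj_closure_OB_general d hd hproper
end
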